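/- Let V be a 2-dimensional real inner product space and 𝔸 : V → V a self-adjoint endomorphism with trace zero satisfying det 𝔸 > −1. Then the symmetric bilinear form h on V defined by h(v, w) := 2⟨𝔸v, w⟩ + (1 − det 𝔸)⟨v, w⟩ is positive definite, i.e. h is an inner product on V. -/

import Mathlib

/-!
By Cayley–Hamilton a trace-free endomorphism of a plane satisfies `A² = -det A`, so for `A`
self-adjoint `‖A v‖² = ⟪A² v, v⟫ = -det A ‖v‖²`. Hence `h(v, v) = ‖v + A v‖²`, and `v + A v = 0`
with `v ≠ 0` would give `‖v‖² = -det A ‖v‖²`, i.e. `det A = -1`.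
-/

open Polynomial Module
open scoped RealInnerProductSpace

section CayleyHamilton

variable {R M : Type*} [CommRing R] [Nontrivial R] [AddCommGroup M] [Module R M]
  [Module.Free R M] [Module.Finite R M]

theorem LinearMap.charpoly_of_finrank_eq_two (f : M →ₗ[R] M) (h : finrank R M = 2) :
    f.charpoly = X ^ 2 - C (LinearMap.trace R M f) * X + C (LinearMap.det f) := by
  rw [charpoly_def, Matrix.charpoly_of_card_eq_two,
    LinearMap.trace_eq_matrix_trace R (Free.chooseBasis R M), LinearMap.det_toMatrix]
  rwa [← finrank_eq_card_chooseBasisIndex]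

theorem LinearMap.sq_eq_of_finrank_eq_two (f : M →ₗ[R] M) (h : finrank R M = 2) :
    f ^ 2 = LinearMap.trace R M f • f - LinearMap.det f • 1 := by
  have hCH := f.aeval_self_charpoly
  rw [f.charpoly_of_finrank_eq_two h] at hCH
  simp only [map_add, map_sub, map_mul, map_pow, aeval_X, aeval_C,
    Algebra.algebraMap_eq_smul_one, smul_one_mul] at hCH
  rw [← sub_eq_zero, ← hCH]
  abel

end CayleyHamilton

namespace LinearMap.IsSymmetric

variable {V : Type*} [NormedAddCommGroup V] [InnerProductSpace ℝ V] [FiniteDimensional ℝ V]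
  {A : V →ₗ[ℝ] V}

theorem norm_apply_sq_of_trace_eq_zero (hdim : finrank ℝ V = 2) (hA : A.IsSymmetric)
    (htr : LinearMap.trace ℝ V A = 0) (v : V) :
    ‖A v‖ ^ 2 = -LinearMap.det A * ‖v‖ ^ 2 := by
  have hsq : A (A v) = -LinearMap.det A • v := by
    simpa [htr, sq, neg_smul] using LinearMap.congr_fun (A.sq_eq_of_finrank_eq_two hdim) v
  rw [← real_inner_self_eq_norm_sq, ← real_inner_self_eq_norm_sq, hA, hsq, real_inner_smul_right]

theorem norm_add_apply_sq_of_trace_eq_zero (hdim : finrank ℝ V = 2) (hA : A.IsSymmetric)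
    (htr : LinearMap.trace ℝ V A = 0) (v : V) :
    ‖v + A v‖ ^ 2 = 2 * ⟪A v, v⟫ + (1 - LinearMap.det A) * ‖v‖ ^ 2 := by
  rw [norm_add_sq_real, hA.norm_apply_sq_of_trace_eq_zero hdim htr, real_inner_comm]
  ring

theorem add_apply_ne_zero_of_trace_eq_zero (hdim : finrank ℝ V = 2) (hA : A.IsSymmetric)
    (htr : LinearMap.trace ℝ V A = 0) (hdet : LinearMap.det A ≠ -1) {v : V} (hv : v ≠ 0) :
    v + A v ≠ 0 := by
  intro hvA
  have hnorm := hA.norm_apply_sq_of_trace_eq_zero hdim htr v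
  rw [eq_neg_of_add_eq_zero_right hvA, norm_neg] at hnorm
  have hv2 : ‖v‖ ^ 2 ≠ 0 := pow_ne_zero 2 (norm_ne_zero_iff.2 hv)
  have hneg : -LinearMap.det A = 1 := mul_right_cancel₀ hv2 (hnorm.symm.trans (one_mul _).symm)
  exact hdet (neg_eq_iff_eq_neg.1 hneg)

end LinearMap.IsSymmetric

/-- If `V` is a 2-dimensional real inner product space and `𝔸 : V → V` is a
self-adjoint traceless endomorphism with `det 𝔸 > −1`, then the symmetric bilinear form
`h(v, w) := 2⟨𝔸v, w⟩ + (1 − det 𝔸)⟨v, w⟩` is positive definite. -/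
theorem h_form_posDef
    (V : Type*) [NormedAddCommGroup V] [InnerProductSpace ℝ V] [FiniteDimensional ℝ V]
    (hdim : Module.finrank ℝ V = 2)
    (A : V →ₗ[ℝ] V)
    (hsa : ∀ v w : V, ⟪A v, w⟫ = ⟪v, A w⟫)
    (htr : LinearMap.trace ℝ V A = 0)
    (hdet : LinearMap.det A > -1)
    (h : V → V → ℝ)
    (hdef : ∀ v w : V, h v w = 2 * ⟪A v, w⟫ + (1 - LinearMap.det A) * ⟪v, w⟫) :
    ∀ v : V, v ≠ 0 → 0 < h v v := by
  intro v hv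
  have hA : A.IsSymmetric := hsa
  rw [hdef, real_inner_self_eq_norm_sq, ← hA.norm_add_apply_sq_of_trace_eq_zero hdim htr]
  exact pow_pos (norm_pos_iff.2 (hA.add_apply_ne_zero_of_trace_eq_zero hdim htr hdet.ne' hv)) 2
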